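/- arXiv:1904.07571 — 9 statements merged into one kernel-verified Lean document; each statement's English description precedes it below -/
import Mathlib

section
/- Let X and Y be topological spaces, with X first-countable and Y Hausdorff and first-countable. Let f : X → Y be continuous, let S ⊆ X be closed, let b ∈ Y and a ∈ X, and assume S ∩ f^{-1}(b) = {a}. Then for any open sets V', V of X with a ∈ V' ⊆ V and with the closure of V compact, there exists an open neighborhood W of b in Y such that f(V ∩ S) ∩ W = f(V' ∩ S) ∩ W. In other words, the image of the restriction f|_S is well-defined as a germ at b. -/
/-!
The points of `V ∩ S` outside `V'` lie in the compact set `K = S ∩ (closure V \ V')`, which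
misses the fibre `f⁻¹(b) ∩ S = {a}`. Its image `f(K)` is compact, hence closed in the Hausdorff
space `Y`, and does not contain `b`; on the open set `W = Y \ f(K)` the two images agree.
-/

open Set

theorem image_inter_compl_image_eq_of_diff_subset {X Y : Type*} (f : X → Y) {A B K : Set X}
    (hAB : A ⊆ B) (hBA : B \ A ⊆ K) : f '' B ∩ (f '' K)ᶜ = f '' A ∩ (f '' K)ᶜ := by
  refine Subset.antisymm ?_ (inter_subset_inter_left _ (image_mono hAB))
  rintro y ⟨⟨x, hxB, rfl⟩, hyK⟩
  by_cases hxA : x ∈ A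
  · exact ⟨mem_image_of_mem f hxA, hyK⟩
  · exact absurd (mem_image_of_mem f (hBA ⟨hxB, hxA⟩)) hyK

theorem stmt_1_general {X Y : Type*} [TopologicalSpace X] [TopologicalSpace Y]
    [T2Space Y]
    (f : X → Y) (hf : Continuous f) (S : Set X) (hS : IsClosed S)
    (b : Y) (a : X) (hfib : S ∩ f ⁻¹' {b} = {a})
    (V' V : Set X) (hV' : IsOpen V')
    (haV' : a ∈ V') (hsub : V' ⊆ V) (hcpt : IsCompact (closure V)) :
    ∃ W : Set Y, IsOpen W ∧ b ∈ W ∧ f '' (V ∩ S) ∩ W = f '' (V' ∩ S) ∩ W := by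
  set K : Set X := S ∩ (closure V \ V')
  have hK : IsCompact K :=
    hcpt.of_isClosed_subset (hS.inter (isClosed_closure.inter hV'.isClosed_compl))
      fun _ hx => hx.2.1
  have hbK : b ∉ f '' K := by
    rintro ⟨x, ⟨hxS, -, hxV'⟩, hfx⟩
    have hxa : x ∈ S ∩ f ⁻¹' {b} := ⟨hxS, hfx⟩
    rw [hfib, mem_singleton_iff] at hxa
    exact hxV' (hxa ▸ haV')
  refine ⟨(f '' K)ᶜ, (hK.image hf).isClosed.isOpen_compl, hbK, ?_⟩
  refine image_inter_compl_image_eq_of_diff_subset f (inter_subset_inter_left _ hsub) ?_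
  rintro x ⟨⟨hxV, hxS⟩, hxV'⟩
  exact ⟨hxS, subset_closure hxV, fun h => hxV' ⟨h, hxS⟩⟩

/-- If `S ∩ f⁻¹(b) = {a}` then the image of the restriction `f|_S` is well-defined
as a germ at `b`: for nested relatively compact open neighbourhoods `V' ⊆ V` of `a`,
the images `f(V ∩ S)` and `f(V' ∩ S)` agree near `b`. -/
theorem stmt_1 {X Y : Type*} [TopologicalSpace X] [TopologicalSpace Y]
    [FirstCountableTopology X] [T2Space Y] [FirstCountableTopology Y]
    (f : X → Y) (hf : Continuous f) (S : Set X) (hS : IsClosed S)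
    (b : Y) (a : X) (hfib : S ∩ f ⁻¹' {b} = {a})
    (V' V : Set X) (hV' : IsOpen V') (hV : IsOpen V)
    (haV' : a ∈ V') (hsub : V' ⊆ V) (hcpt : IsCompact (closure V)) :
    ∃ W : Set Y, IsOpen W ∧ b ∈ W ∧ f '' (V ∩ S) ∩ W = f '' (V' ∩ S) ∩ W :=
  stmt_1_general f hf S hS b a hfib V' V hV' haV' hsub hcpt
end

section
/- Let m ≥ p ≥ 1, let U be an open neighborhood of 0 in ℝ^m, and let G : U → ℝ^p be real-analytic with G(0) = 0. Assume Sing G ∩ G^{-1}(0) ∩ U = {0} and that 0 is not an isolated point of G^{-1}(0) ∩ U. Then G is a nice map germ, namely: (i) for every sufficiently small ε > 0 there exists δ > 0 such that the open ball B_δ ⊆ ℝ^p is contained in G(U ∩ B_ε), so (Im G, 0) = (ℝ^p, 0); and (ii) G(Sing G) is well-defined as a set germ at 0, i.e., there exists ε₀ > 0 such that for all ε, ε' ∈ (0, ε₀) there exists δ > 0 with G(Sing G ∩ B_ε) ∩ B_δ = G(Sing G ∩ B_ε') ∩ B_δ. -/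
open Metric Function Topology

lemma surj_open {E F : Type*} [NormedAddCommGroup E] [NormedAddCommGroup F]
    [NormedSpace ℝ E] [NormedSpace ℝ F] [FiniteDimensional ℝ E] [FiniteDimensional ℝ F] :
    IsOpen {f : E →L[ℝ] F | Function.Surjective f} := by
  rw [Metric.isOpen_iff]
  intro f hf
  obtain ⟨s, hs⟩ := (f : E →ₗ[ℝ] F).exists_rightInverse_of_surjective
    (LinearMap.range_eq_top.mpr hf)
  set S : F →L[ℝ] E := LinearMap.toContinuousLinearMap s with hS
  have hfS : ∀ y, f (S y) = y := fun y => LinearMap.congr_fun hs y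
  refine ⟨(‖S‖ + 1)⁻¹, by positivity, fun g hg => ?_⟩
  rw [mem_ball, dist_eq_norm] at hg
  set t : F →L[ℝ] F := (f - g).comp S with ht
  have htn : ‖t‖ < 1 := by
    calc ‖t‖ ≤ ‖f - g‖ * ‖S‖ := ContinuousLinearMap.opNorm_comp_le _ _
    _ < (‖S‖ + 1)⁻¹ * (‖S‖ + 1) := by
        apply mul_lt_mul' _ (lt_add_one _) (norm_nonneg _) (by positivity)
        rw [← norm_neg]; simpa using hg.le
    _ = 1 := by field_simp
  have hu : (1 : F →L[ℝ] F) - t = g.comp S := by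
    ext y
    simp [ht, hfS y, ContinuousLinearMap.sub_apply]
  set u := Units.oneSub t htn with hu'
  intro y
  refine ⟨S ((↑u⁻¹ : F →L[ℝ] F) y), ?_⟩
  have : (g.comp S) ((↑u⁻¹ : F →L[ℝ] F) y) = ((↑u * ↑u⁻¹ : F →L[ℝ] F)) y := by
    rw [Units.val_oneSub, hu]; rfl
  simpa [u.mul_inv] using this

/-- If `Sing G ∩ G⁻¹(0) = {0}` and `0` is not an isolated point of `G⁻¹(0)`, then `G`
is a nice map germ: `(Im G, 0) = (ℝ^p, 0)` and `G(Sing G)` is well-defined as a set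
germ at the origin. -/
theorem stmt_2 (m p : ℕ) (hp : 1 ≤ p) (hmp : p ≤ m)
    (U : Set (EuclideanSpace ℝ (Fin m))) (hU : IsOpen U)
    (h0U : (0 : EuclideanSpace ℝ (Fin m)) ∈ U)
    (G : EuclideanSpace ℝ (Fin m) → EuclideanSpace ℝ (Fin p))
    (hG : AnalyticOnNhd ℝ G U) (hG0 : G 0 = 0)
    (hsing : {x ∈ U | ¬ Function.Surjective (fderiv ℝ G x)} ∩ {x | G x = 0} ∩ U = {0})
    (hnoniso : ∀ ε > 0, ∃ x ∈ U, x ≠ 0 ∧ G x = 0 ∧ ‖x‖ < ε) :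
    (∃ ε₀ > 0, ∀ ε, 0 < ε → ε < ε₀ → ∃ δ > 0,
      ball (0 : EuclideanSpace ℝ (Fin p)) δ ⊆ G '' (U ∩ ball 0 ε)) ∧
    (∃ ε₀ > 0, ∀ ε ε', 0 < ε → ε < ε₀ → 0 < ε' → ε' < ε₀ → ∃ δ > 0,
      G '' ({x ∈ U | ¬ Function.Surjective (fderiv ℝ G x)} ∩ ball 0 ε) ∩ ball 0 δ =
      G '' ({x ∈ U | ¬ Function.Surjective (fderiv ℝ G x)} ∩ ball 0 ε') ∩ ball 0 δ) := by
  obtain ⟨r, hr, hrU⟩ := Metric.isOpen_iff.mp hU 0 h0U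
  set Sing := {x ∈ U | ¬ Function.Surjective (fderiv ℝ G x)} with hSing
  constructor
  · -- Part (i)
    refine ⟨r, hr, fun ε hε hεr => ?_⟩
    obtain ⟨x, hxU, hx0, hGx, hxε⟩ := hnoniso ε hε
    have hsurj : Function.Surjective (fderiv ℝ G x) := by
      by_contra h
      apply hx0
      have : x ∈ ({0} : Set (EuclideanSpace ℝ (Fin m))) := by
        rw [← hsing]; exact ⟨⟨⟨hxU, h⟩, hGx⟩, hxU⟩
      exact this
    have hmap : Filter.map G (𝓝 x) = 𝓝 (G x) :=
      (hG x hxU).hasStrictFDerivAt.map_nhds_eq_of_surj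
        (LinearMap.range_eq_top.mpr hsurj)
    have hmem : G '' (U ∩ ball 0 ε) ∈ 𝓝 (0 : EuclideanSpace ℝ (Fin p)) := by
      rw [← hGx, ← hmap]
      exact Filter.image_mem_map ((hU.inter isOpen_ball).mem_nhds
        ⟨hxU, by simpa [mem_ball, dist_eq_norm] using hxε⟩)
    obtain ⟨δ, hδ, hδsub⟩ := Metric.mem_nhds_iff.mp hmem
    exact ⟨δ, hδ, hδsub⟩
  · -- Part (ii)
    have hVopen : IsOpen {x | x ∈ U ∧ Function.Surjective (fderiv ℝ G x)} := by
      have : {x | x ∈ U ∧ Function.Surjective (fderiv ℝ G x)} =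
          U ∩ (fderiv ℝ G) ⁻¹' {f | Function.Surjective f} := rfl
      rw [this]
      exact (hG.fderiv.continuousOn).isOpen_inter_preimage hU surj_open
    have key : ∀ a b : ℝ, 0 < a → a ≤ b → b < r → ∃ δ > 0,
        G '' (Sing ∩ ball 0 a) ∩ ball 0 δ = G '' (Sing ∩ ball 0 b) ∩ ball 0 δ := by
      intro a b ha hab hbr
      set K := (closedBall (0 : EuclideanSpace ℝ (Fin m)) b \ ball 0 a) \
        {x | x ∈ U ∧ Function.Surjective (fderiv ℝ G x)} with hK
      have hKU : K ⊆ U := fun x hx => hrU (lt_of_le_of_lt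
        (by simpa [mem_closedBall, dist_eq_norm] using hx.1.1) hbr)
      have hKcomp : IsCompact K :=
        ((isCompact_closedBall _ _).diff isOpen_ball).diff hVopen
      have hKne : ∀ x ∈ K, G x ≠ 0 := by
        intro x hx hGx
        have hxU : x ∈ U := hKU hx
        have hns : ¬ Function.Surjective (fderiv ℝ G x) := fun h => hx.2 ⟨hxU, h⟩
        have : x ∈ ({0} : Set (EuclideanSpace ℝ (Fin m))) := by
          rw [← hsing]; exact ⟨⟨⟨hxU, hns⟩, hGx⟩, hxU⟩
        rw [this] at hx
        exact hx.1.2 (by simpa [mem_ball] using ha)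
      obtain ⟨δ, hδ, hδK⟩ : ∃ δ > 0, ∀ x ∈ K, δ ≤ ‖G x‖ := by
        rcases K.eq_empty_or_nonempty with hKe | hKne'
        · exact ⟨1, one_pos, fun x hx => absurd (hKe ▸ hx) (Set.notMem_empty x)⟩
        · obtain ⟨x₀, hx₀, hmin⟩ := hKcomp.exists_isMinOn hKne'
            (((hG.continuousOn.mono hKU)).norm)
          exact ⟨‖G x₀‖, norm_pos_iff.mpr (hKne x₀ hx₀), fun x hx => hmin hx⟩
      refine ⟨δ, hδ, Set.Subset.antisymm ?_ ?_⟩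
      · exact Set.inter_subset_inter_left _ (Set.image_mono
          (Set.inter_subset_inter_right _ (ball_subset_ball hab)))
      · rintro y ⟨⟨x, ⟨hxS, hxb⟩, rfl⟩, hyδ⟩
        refine ⟨⟨x, ⟨hxS, ?_⟩, rfl⟩, hyδ⟩
        by_contra hxa
        have hxK : x ∈ K := by
          refine ⟨⟨ball_subset_closedBall hxb, hxa⟩, fun h => hxS.2 h.2⟩
        exact absurd (hδK x hxK) (not_le.mpr (by simpa [mem_ball, dist_eq_norm] using hyδ))
    refine ⟨r, hr, fun ε ε' hε hεr hε' hε'r => ?_⟩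
    rcases le_total ε ε' with h | h
    · exact key ε ε' hε h hε'r
    · obtain ⟨δ, hδ, heq⟩ := key ε' ε hε' h hεr
      exact ⟨δ, hδ, heq.symm⟩
end

section
/- Let F : ℂ³ → ℂ³ be given by F(x, y, z) = (xy, y, z²), and let K = {(x, y, z) ∈ ℂ³ : z = 0}. Then the image F(K) is NOT well-defined as a set germ at 0: for every ε₀ > 0 there exist ε, ε' with 0 < ε' < ε < ε₀ such that for every δ > 0 one has F(K ∩ B_ε) ∩ B_δ ≠ F(K ∩ B_ε') ∩ B_δ. -/
open Metric

/-- For `F(x,y,z) = (xy, y, z²)` and `K = {z = 0}`, the image `F(K)` is not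
well-defined as a set germ at the origin. -/
theorem stmt_5 :
    ∀ ε₀ > (0 : ℝ), ∃ ε ε' : ℝ, 0 < ε' ∧ ε' < ε ∧ ε < ε₀ ∧ ∀ δ > (0 : ℝ),
      (fun v : ℂ × ℂ × ℂ => (v.1 * v.2.1, v.2.1, v.2.2 ^ 2)) ''
          ({v : ℂ × ℂ × ℂ | v.2.2 = 0} ∩ ball 0 ε) ∩ ball (0 : ℂ × ℂ × ℂ) δ ≠
      (fun v : ℂ × ℂ × ℂ => (v.1 * v.2.1, v.2.1, v.2.2 ^ 2)) ''
          ({v : ℂ × ℂ × ℂ | v.2.2 = 0} ∩ ball 0 ε') ∩ ball (0 : ℂ × ℂ × ℂ) δ := by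
  intro ε₀ hε₀
  refine ⟨ε₀/2, ε₀/4, by linarith, by linarith, by linarith, ?_⟩
  intro δ hδ h
  set ε : ℝ := ε₀/2 with hε
  set ε' : ℝ := ε₀/4 with hε'
  have hε'pos : 0 < ε' := by positivity
  have hεpos : 0 < ε := by positivity
  have hlt : ε' < ε := by rw [hε, hε']; linarith
  set t : ℝ := min (δ/(ε'+1)) ε / 2 with ht_def
  have htpos : 0 < t := by
    have : 0 < δ/(ε'+1) := by positivity
    have := lt_min this hεpos
    positivity
  have htε : t < ε := by
    have : t ≤ ε / 2 := by
      rw [ht_def]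
      gcongr
      exact min_le_right _ _
    linarith
  have htδ : (ε'+1) * t < δ := by
    have h1 : t ≤ δ/(ε'+1) / 2 := by
      rw [ht_def]; gcongr; exact min_le_left _ _
    have h2 : (ε'+1) * t ≤ (ε'+1) * (δ/(ε'+1)/2) := by
      gcongr
    have h3 : (ε'+1) * (δ/(ε'+1)/2) = δ/2 := by
      field_simp
    rw [h3] at h2
    linarith
  have htδ' : ε' * t < δ := by nlinarith
  have htδ'' : t < δ := by nlinarith
  -- the witness point
  set p : ℂ × ℂ × ℂ := ((ε' : ℂ) * (t : ℂ), (t : ℂ), 0) with hp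
  have hmemL : p ∈ (fun v : ℂ × ℂ × ℂ => (v.1 * v.2.1, v.2.1, v.2.2 ^ 2)) ''
      ({v : ℂ × ℂ × ℂ | v.2.2 = 0} ∩ ball 0 ε) ∩ ball (0 : ℂ × ℂ × ℂ) δ := by
    constructor
    · refine ⟨((ε' : ℂ), (t : ℂ), 0), ⟨rfl, ?_⟩, ?_⟩
      · rw [mem_ball_zero_iff]
        simp only [Prod.norm_def, Complex.norm_real, norm_zero]
        rw [Real.norm_of_nonneg hε'pos.le, Real.norm_of_nonneg htpos.le]
        exact max_lt hlt (max_lt htε hεpos)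
      · simp [hp]
    · rw [mem_ball_zero_iff]
      simp only [hp, Prod.norm_def, norm_mul, Complex.norm_real, norm_zero]
      rw [Real.norm_of_nonneg hε'pos.le, Real.norm_of_nonneg htpos.le]
      exact max_lt htδ' (max_lt htδ'' hδ)
  rw [h] at hmemL
  obtain ⟨⟨v, ⟨hz, hb⟩, hfv⟩, _⟩ := hmemL
  rw [mem_ball_zero_iff] at hb
  simp only [Prod.norm_def] at hb
  have h1 : v.1 * v.2.1 = (ε' : ℂ) * (t : ℂ) := congrArg Prod.fst hfv
  have h2 : v.2.1 = (t : ℂ) := congrArg (fun q => q.2.1) hfv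
  have htne : (t : ℂ) ≠ 0 := by
    exact_mod_cast Complex.ofReal_ne_zero.mpr htpos.ne'
  have hv1 : v.1 = (ε' : ℂ) := by
    rw [h2] at h1
    exact mul_right_cancel₀ htne h1
  have : ‖v.1‖ < ε' := lt_of_le_of_lt (le_max_left _ _) hb
  rw [hv1] at this
  simp only [Complex.norm_real] at this
  rw [Real.norm_of_nonneg hε'pos.le] at this
  exact lt_irrefl _ this
end

section
/- Let U be an open neighborhood of a point x₀ in ℂ^n and let f, g : U → ℂ be holomorphic. If the complex Fréchet derivative at x₀ of the map (f, g) : U → ℂ² is surjective and f(x₀)·g(x₀) ≠ 0, then the Fréchet derivative over ℝ at x₀ of the map h(z) = f(z)·conj(g(z)) (viewed as a map between real vector spaces ℂ^n → ℂ) is surjective. Equivalently, Sing(f·conj(g)) ⊆ Sing(f, g) ∪ {f·g = 0}. -/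
open Function ComplexConjugate

/-! Choose `v` with `Df v = 1` and `Dg v = 0`. The real derivative of `f · conj g` is
`w ↦ f(x₀) · conj (Dg w) + conj (g x₀) · Df w`, so it sends `(z / conj (g x₀)) • v` to `z`. -/

variable {E : Type*} [NormedAddCommGroup E] [NormedSpace ℂ E]

theorem HasFDerivAt.mul_conj {f g : E → ℂ} {f' g' : E →L[ℂ] ℂ} {x : E}
    (hf : HasFDerivAt f f' x) (hg : HasFDerivAt g g' x) :
    HasFDerivAt (fun y => f y * conj (g y))
      (f x • Complex.conjCLE.toContinuousLinearMap.comp (g'.restrictScalars ℝ) +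
        conj (g x) • f'.restrictScalars ℝ) x :=
  (hf.restrictScalars ℝ).mul (Complex.conjCLE.hasFDerivAt.comp x (hg.restrictScalars ℝ))

theorem surjective_smul_conj_comp_add_smul {f' g' : E →L[ℂ] ℂ} (a : ℂ) {b : ℂ} (hb : b ≠ 0)
    (h : Surjective (f'.prod g')) :
    Surjective (a • Complex.conjCLE.toContinuousLinearMap.comp (g'.restrictScalars ℝ) +
      b • f'.restrictScalars ℝ) := by
  obtain ⟨v, hv⟩ := h (1, 0)
  have hfv : f' v = 1 := congrArg Prod.fst hv
  have hgv : g' v = 0 := congrArg Prod.snd hv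
  intro z
  refine ⟨(z / b) • v, ?_⟩
  simp [hfv, hgv, mul_div_cancel₀ z hb]

theorem stmt_8_general (n : ℕ)
    (U : Set (EuclideanSpace ℂ (Fin n)))
    (x₀ : EuclideanSpace ℂ (Fin n)) (hx₀ : x₀ ∈ U)
    (f g : EuclideanSpace ℂ (Fin n) → ℂ)
    (hf : AnalyticOnNhd ℂ f U) (hg : AnalyticOnNhd ℂ g U)
    (hsurj : Function.Surjective (fderiv ℂ (fun x => (f x, g x)) x₀))
    (hne : f x₀ * g x₀ ≠ 0) :
    Function.Surjective (fderiv ℝ (fun x => f x * (starRingEnd ℂ) (g x)) x₀) := by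
  have hf' := (hf x₀ hx₀).differentiableAt.hasFDerivAt
  have hg' := (hg x₀ hx₀).differentiableAt.hasFDerivAt
  rw [(hf'.prodMk hg').fderiv] at hsurj
  rw [(hf'.mul_conj hg').fderiv]
  exact surjective_smul_conj_comp_add_smul _
    ((map_ne_zero _).mpr (right_ne_zero_of_mul hne)) hsurj

/-- If `(f,g)` is a submersion at `x₀` and `f(x₀)·g(x₀) ≠ 0`, then `f·conj g` is a
(real) submersion at `x₀`; i.e. `Sing (f·conj g) ⊆ Sing (f,g) ∪ {fg = 0}`. -/
theorem stmt_8 (n : ℕ)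
    (U : Set (EuclideanSpace ℂ (Fin n))) (hU : IsOpen U)
    (x₀ : EuclideanSpace ℂ (Fin n)) (hx₀ : x₀ ∈ U)
    (f g : EuclideanSpace ℂ (Fin n) → ℂ)
    (hf : AnalyticOnNhd ℂ f U) (hg : AnalyticOnNhd ℂ g U)
    (hsurj : Function.Surjective (fderiv ℂ (fun x => (f x, g x)) x₀))
    (hne : f x₀ * g x₀ ≠ 0) :
    Function.Surjective (fderiv ℝ (fun x => f x * (starRingEnd ℂ) (g x)) x₀) :=
  stmt_8_general n U x₀ hx₀ f g hf hg hsurj hne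
end

section
/- Let p, q ≥ 1 be integers with p ≠ q, and let w be a holomorphic function on a neighborhood of 0 in ℂ with w(0) ≠ 0. Define φ : ℂ → ℂ by φ(t) = t^p · conj(t^q · w(t)), where conj denotes complex conjugation. Then there exists δ > 0 such that for every t with 0 < |t| < δ, the Fréchet derivative over ℝ of φ at t (viewing ℂ as a real vector space) is surjective; i.e., φ is a submersion on a punctured neighborhood of 0. -/
/-!
Write `φ = f · conj g` with `f t = tᵖ` and `g t = t^q w t` holomorphic. The real derivative of `φ`
at `t` is `v ↦ a v + b v̄` with `a = f'(t) conj (g t)` and `b = f t conj (g'(t))`, and such a map is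
onto as soon as `|a| ≠ |b|`. After dividing by `|f g / t|`, the norms `|a|` and `|b|` become
`|t f'/f| = p` and `|t g'/g| = |q + t w'/w|`, and the latter tends to `q ≠ p` as `t → 0`.
-/

open Function ComplexConjugate Filter Topology

theorem Complex.surjective_mul_add_mul_conj {a b : ℂ} (h : ‖a‖ ≠ ‖b‖) :
    Surjective fun v : ℂ => a * v + b * conj v := by
  have hD : ((normSq a - normSq b : ℝ) : ℂ) ≠ 0 := by
    rw [Complex.ofReal_ne_zero, sub_ne_zero]
    contrapose! h
    rw [Complex.norm_def, Complex.norm_def, h]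
  intro c
  refine ⟨(conj a * c - b * conj c) / (normSq a - normSq b : ℝ), ?_⟩
  simp only [map_div₀, map_sub, map_mul, Complex.conj_conj, Complex.conj_ofReal]
  field_simp
  push_cast
  linear_combination c * Complex.mul_conj a - c * Complex.mul_conj b

theorem fderiv_mul_conj_apply {f g : ℂ → ℂ} {f' g' t : ℂ} (hf : HasDerivAt f f' t)
    (hg : HasDerivAt g g' t) (v : ℂ) :
    fderiv ℝ (fun s => f s * conj (g s)) t v = f' * conj (g t) * v + f t * conj g' * conj v := by
  have hconj : HasFDerivAt (fun s => conj (g s))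
      (Complex.conjCLE.toContinuousLinearMap.comp
        ((ContinuousLinearMap.smulRight (1 : ℂ →L[ℂ] ℂ) g').restrictScalars ℝ)) t :=
    Complex.conjCLE.toContinuousLinearMap.hasFDerivAt.comp t (hg.hasFDerivAt.restrictScalars ℝ)
  have hmul : HasFDerivAt (f * fun s => conj (g s)) _ t :=
    (hf.hasFDerivAt.restrictScalars ℝ).mul hconj
  rw [← Pi.mul_def, hmul.fderiv]
  simp only [add_apply, smul_apply, ContinuousLinearMap.comp_apply,
    ContinuousLinearMap.coe_restrictScalars', ContinuousLinearMap.smulRight_apply,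
    one_apply_eq_self, smul_eq_mul, ContinuousLinearEquiv.coe_coe, ContinuousAlgEquiv.coeCLE_apply,
    Complex.conjCAE_apply, map_mul, ContinuousLinearMap.toSpanSingleton_apply]
  ring

theorem mul_natCast_mul_pow_pred {R : Type*} [CommSemiring R] (n : ℕ) (t : R) :
    t * (n * t ^ (n - 1)) = n * t ^ n := by
  cases n with
  | zero => simp
  | succ n => simp only [Nat.add_sub_cancel, pow_succ]; ring

theorem eventually_mul_norm_ne_norm_deriv {w : ℂ → ℂ} (hw : AnalyticAt ℂ w 0) (hw0 : w 0 ≠ 0)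
    {p q : ℕ} (hpq : p ≠ q) :
    ∀ᶠ t in 𝓝 0, AnalyticAt ℂ w t ∧ (p : ℝ) * ‖w t‖ ≠ ‖q * w t + t * deriv w t‖ := by
  have hcont : ContinuousAt (fun t => (p : ℝ) * ‖w t‖ - ‖q * w t + t * deriv w t‖) 0 := by
    have := hw.continuousAt
    have := hw.deriv.continuousAt
    fun_prop
  have hne : (p : ℝ) * ‖w 0‖ - ‖q * w 0 + 0 * deriv w 0‖ ≠ 0 := by
    rw [zero_mul, add_zero, norm_mul, Complex.norm_natCast, ← sub_mul]
    exact mul_ne_zero (sub_ne_zero.mpr (mod_cast hpq)) (norm_ne_zero_iff.mpr hw0)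
  filter_upwards [hw.eventually_analyticAt, hcont.eventually_ne hne] with t hwt ht
  exact ⟨hwt, sub_ne_zero.mp ht⟩

theorem norm_deriv_mul_conj_ne_norm_mul_conj_deriv {p q : ℕ} {t w₀ w₁ : ℂ} (ht : t ≠ 0)
    (h : (p : ℝ) * ‖w₀‖ ≠ ‖q * w₀ + t * w₁‖) :
    ‖p * t ^ (p - 1) * conj (t ^ q * w₀)‖ ≠ ‖t ^ p * conj (q * t ^ (q - 1) * w₀ + t ^ q * w₁)‖ := by
  have hpow : ‖t‖ ^ p * ‖t‖ ^ q ≠ 0 := by positivity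
  refine fun heq => h (mul_left_cancel₀ hpow ?_)
  have hp : ‖t‖ * ‖p * t ^ (p - 1)‖ = p * ‖t‖ ^ p := by
    rw [← norm_mul, mul_natCast_mul_pow_pred, norm_mul, norm_pow, Complex.norm_natCast]
  have hq : t * (q * t ^ (q - 1) * w₀ + t ^ q * w₁) = t ^ q * (q * w₀ + t * w₁) := by
    linear_combination w₀ * mul_natCast_mul_pow_pred q t
  calc ‖t‖ ^ p * ‖t‖ ^ q * (p * ‖w₀‖)
      = ‖t‖ * ‖p * t ^ (p - 1) * conj (t ^ q * w₀)‖ := by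
        rw [norm_mul _ (conj _), RCLike.norm_conj, ← mul_assoc ‖t‖, hp, norm_mul, norm_pow]; ring
    _ = ‖t‖ * ‖t ^ p * conj (q * t ^ (q - 1) * w₀ + t ^ q * w₁)‖ := by rw [heq]
    _ = ‖t‖ ^ p * ‖t‖ ^ q * ‖q * w₀ + t * w₁‖ := by
        rw [norm_mul, RCLike.norm_conj, mul_left_comm, ← norm_mul, hq, norm_mul, norm_pow,
          norm_pow]; ring

theorem stmt_9_general (p q : ℕ) (hpq : p ≠ q)
    (V : Set ℂ) (h0V : (0 : ℂ) ∈ V)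
    (w : ℂ → ℂ) (hw : AnalyticOnNhd ℂ w V) (hw0 : w 0 ≠ 0) :
    ∃ δ > 0, ∀ t : ℂ, t ≠ 0 → ‖t‖ < δ →
      Function.Surjective
        (fderiv ℝ (fun t : ℂ => t ^ p * (starRingEnd ℂ) (t ^ q * w t)) t) := by
  obtain ⟨δ, hδ, hnear⟩ :=
    Metric.eventually_nhds_iff.mp (eventually_mul_norm_ne_norm_deriv (hw 0 h0V) hw0 hpq)
  refine ⟨δ, hδ, fun t ht htδ => ?_⟩
  obtain ⟨hwt, hne⟩ := hnear (by rwa [dist_zero_right])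
  have hg : HasDerivAt (fun s => s ^ q * w s) (q * t ^ (q - 1) * w t + t ^ q * deriv w t) t :=
    (hasDerivAt_pow q t).mul hwt.differentiableAt.hasDerivAt
  rw [funext (fderiv_mul_conj_apply (hasDerivAt_pow p t) hg)]
  exact Complex.surjective_mul_add_mul_conj (norm_deriv_mul_conj_ne_norm_mul_conj_deriv ht hne)

/-- For `p ≠ q` and `w` holomorphic near `0` with `w 0 ≠ 0`, the map
`φ(t) = tᵖ · conj(t^q · w t)` is a real submersion on a punctured neighbourhood
of the origin. -/
theorem stmt_9 (p q : ℕ) (hp : 1 ≤ p) (hq : 1 ≤ q) (hpq : p ≠ q)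
    (V : Set ℂ) (hV : IsOpen V) (h0V : (0 : ℂ) ∈ V)
    (w : ℂ → ℂ) (hw : AnalyticOnNhd ℂ w V) (hw0 : w 0 ≠ 0) :
    ∃ δ > 0, ∀ t : ℂ, t ≠ 0 → ‖t‖ < δ →
      Function.Surjective
        (fderiv ℝ (fun t : ℂ => t ^ p * (starRingEnd ℂ) (t ^ q * w t)) t) :=
  stmt_9_general p q hpq V h0V w hw hw0
end

section
/- Let m, p ≥ 1, let X ⊆ ℝ^m be a closed set with 0 ∈ X, and let h : X → ℝ^p be continuous with h(0) = 0. Define N_h := {x ∈ X : for all y ∈ X with h(y) = h(x), ‖x‖ ≤ ‖y‖} (the set of points of minimal norm in their fibre). Then the image of h is well-defined as a germ at the origin — i.e., there exists ε₀ > 0 such that for all ε, ε' ∈ (0, ε₀) there exists δ > 0 with h(X ∩ B_ε) ∩ B_δ = h(X ∩ B_ε') ∩ B_δ — if and only if 0 is an isolated point of closure(N_h) ∩ h^{-1}(0), i.e., there exists r > 0 such that closure(N_h) ∩ {x ∈ X : h(x) = 0} ∩ B_r = {0}. -/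
/-!
Every point of `X` shares its fibre with a point of minimal norm, i.e. a point of `N_h`.

If the image germ is well defined and `z ∈ closure N_h` is a nonzero zero of `h`, then for
`ε < ‖z‖ < ε'` the points of `N_h` near `z` have small values of `h` that are attained on `B_ε'`
but not on `B_ε`.

Conversely, if `0` is isolated in `closure N_h ∩ h⁻¹(0)`, then `h` is bounded away from `0` on
the compact shell `closure N_h ∩ {a ≤ ‖x‖ ≤ b}`, so a small value `h x` with `‖x‖ < b` is
attained at a point of `N_h` of norm `< a`.
-/

open Metric Filter Topology Set

variable {E F : Type*} [SeminormedAddCommGroup E] {X : Set E} {h : E → F}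

def minNormInFibre (X : Set E) (h : E → F) : Set E :=
  {x ∈ X | ∀ y ∈ X, h y = h x → ‖x‖ ≤ ‖y‖}

lemma zero_mem_minNormInFibre (h0X : (0 : E) ∈ X) : (0 : E) ∈ minNormInFibre X h :=
  ⟨h0X, fun y _ _ => by simp⟩

lemma minNormInFibre_subset : minNormInFibre X h ⊆ X := fun _ hx => hx.1

lemma closure_minNormInFibre_subset (hX : IsClosed X) : closure (minNormInFibre X h) ⊆ X :=
  closure_minimal minNormInFibre_subset hX

lemma exists_mem_minNormInFibre [TopologicalSpace F] [T1Space F] [ProperSpace E]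
    (hX : IsClosed X) (hcont : ContinuousOn h X) {x : E} (hx : x ∈ X) :
    ∃ z ∈ minNormInFibre X h, h z = h x ∧ ‖z‖ ≤ ‖x‖ := by
  have hfibre : IsClosed (X ∩ h ⁻¹' {h x}) :=
    hcont.preimage_isClosed_of_isClosed hX isClosed_singleton
  obtain ⟨z, ⟨hzX, hzx⟩, hzd⟩ := hfibre.exists_infDist_eq_dist ⟨x, hx, rfl⟩ 0
  have hmin : ∀ y ∈ X, h y = h x → ‖z‖ ≤ ‖y‖ := fun y hyX hyx => by
    have hy := infDist_le_dist_of_mem (x := (0 : E)) (s := X ∩ h ⁻¹' {h x}) ⟨hyX, hyx⟩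
    rwa [hzd, dist_zero_left, dist_zero_left] at hy
  exact ⟨z, ⟨hzX, fun y hyX hyz => hmin y hyX (hyz.trans hzx)⟩, hzx, hmin x hx rfl⟩

lemma apply_notMem_image_inter_ball {z : E} {ε : ℝ} (hz : z ∈ minNormInFibre X h)
    (hε : ε ≤ ‖z‖) : h z ∉ h '' (X ∩ ball 0 ε) := by
  rintro ⟨y, ⟨hyX, hyε⟩, hyz⟩
  exact (hε.trans (hz.2 y hyX hyz)).not_gt (mem_ball_zero_iff.1 hyε)

lemma image_inter_ball_inter_ball_ne [NormedAddCommGroup F] {z : E} {ε ε' δ : ℝ}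
    (hcont : ContinuousWithinAt h X z) (hzN : z ∈ closure (minNormInFibre X h)) (hz0 : h z = 0)
    (hε : ε < ‖z‖) (hε' : ‖z‖ < ε') (hδ : 0 < δ) :
    h '' (X ∩ ball 0 ε) ∩ ball 0 δ ≠ h '' (X ∩ ball 0 ε') ∩ ball 0 δ := by
  intro heq
  have : (𝓝[minNormInFibre X h] z).NeBot := mem_closure_iff_nhdsWithin_neBot.1 hzN
  have hlim : Tendsto h (𝓝[X] z) (𝓝 0) := hz0 ▸ hcont
  have hnear : ∀ᶠ w in 𝓝[X] z, h w ∈ ball 0 δ ∧ ‖w‖ ∈ Ioo ε ε' :=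
    (hlim.eventually_mem (ball_mem_nhds 0 hδ)).and <| nhdsWithin_le_nhds <|
      continuous_norm.continuousAt.preimage_mem_nhds (Ioo_mem_nhds hε hε')
  have hnearN := hnear.filter_mono (nhdsWithin_mono z (minNormInFibre_subset (h := h)))
  obtain ⟨w, ⟨hwδ, hwε, hwε'⟩, hwN⟩ := (hnearN.and self_mem_nhdsWithin).exists
  have hw : h w ∈ h '' (X ∩ ball 0 ε') ∩ ball 0 δ :=
    ⟨⟨w, ⟨hwN.1, mem_ball_zero_iff.2 hwε'⟩, rfl⟩, hwδ⟩
  exact apply_notMem_image_inter_ball hwN hwε.le (heq ▸ hw).1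

lemma exists_image_inter_ball_inter_ball_subset [NormedAddCommGroup F] [ProperSpace E]
    (hX : IsClosed X) (hcont : ContinuousOn h X) {r a b : ℝ}
    (hiso : closure (minNormInFibre X h) ∩ {x ∈ X | h x = 0} ∩ ball 0 r ⊆ {0})
    (ha : 0 < a) (hbr : b < r) :
    ∃ δ > 0, h '' (X ∩ ball 0 b) ∩ ball 0 δ ⊆ h '' (X ∩ ball 0 a) := by
  set K := closure (minNormInFibre X h) ∩ (closedBall 0 b \ ball 0 a)
  have hKX : K ⊆ X := inter_subset_left.trans (closure_minNormInFibre_subset hX)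
  have hK : IsCompact K := ((isCompact_closedBall 0 b).diff isOpen_ball).inter_left isClosed_closure
  have h0K : (0 : F) ∉ h '' K := by
    rintro ⟨x, hxK, hx0⟩
    have hxr : x ∈ ball 0 r :=
      mem_ball_zero_iff.2 ((mem_closedBall_zero_iff.1 hxK.2.1).trans_lt hbr)
    have hx : x = 0 := hiso ⟨⟨hxK.1, hKX hxK, hx0⟩, hxr⟩
    exact hxK.2.2 (hx ▸ mem_ball_self ha)
  obtain ⟨δ, hδ, hδK⟩ :=
    Metric.isOpen_iff.1 (hK.image_of_continuousOn (hcont.mono hKX)).isClosed.isOpen_compl 0 h0K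
  refine ⟨δ, hδ, ?_⟩
  rintro _ ⟨⟨x, ⟨hxX, hxb⟩, rfl⟩, hxδ⟩
  obtain ⟨z, hzN, hzx, hzle⟩ := exists_mem_minNormInFibre hX hcont hxX
  refine ⟨z, ⟨hzN.1, ?_⟩, hzx⟩
  by_contra hza
  have hzb : z ∈ closedBall 0 b :=
    mem_closedBall_zero_iff.2 (hzle.trans (mem_ball_zero_iff.1 hxb).le)
  exact hδK (hzx ▸ hxδ) ⟨z, ⟨subset_closure hzN, hzb, hza⟩, rfl⟩

lemma exists_image_inter_ball_inter_ball_eq [NormedAddCommGroup F] [ProperSpace E]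
    (hX : IsClosed X) (hcont : ContinuousOn h X) {r a b : ℝ}
    (hiso : closure (minNormInFibre X h) ∩ {x ∈ X | h x = 0} ∩ ball 0 r ⊆ {0})
    (ha : 0 < a) (har : a < r) (hb : 0 < b) (hbr : b < r) :
    ∃ δ > 0, h '' (X ∩ ball 0 a) ∩ ball 0 δ = h '' (X ∩ ball 0 b) ∩ ball 0 δ := by
  obtain ⟨δ₁, hδ₁, hba⟩ := exists_image_inter_ball_inter_ball_subset hX hcont hiso ha hbr
  obtain ⟨δ₂, hδ₂, hab⟩ := exists_image_inter_ball_inter_ball_subset hX hcont hiso hb har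
  refine ⟨min δ₁ δ₂, lt_min hδ₁ hδ₂, subset_antisymm ?_ ?_⟩
  · exact fun v hv => ⟨hab ⟨hv.1, ball_subset_ball (min_le_right _ _) hv.2⟩, hv.2⟩
  · exact fun v hv => ⟨hba ⟨hv.1, ball_subset_ball (min_le_left _ _) hv.2⟩, hv.2⟩

theorem stmt_10_general (m p : ℕ)
    (X : Set (EuclideanSpace ℝ (Fin m))) (hX : IsClosed X)
    (h0X : (0 : EuclideanSpace ℝ (Fin m)) ∈ X)
    (h : EuclideanSpace ℝ (Fin m) → EuclideanSpace ℝ (Fin p))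
    (hcont : ContinuousOn h X) (h0 : h 0 = 0) :
    (∃ ε₀ > 0, ∀ ε ε', 0 < ε → ε < ε₀ → 0 < ε' → ε' < ε₀ → ∃ δ > 0,
        h '' (X ∩ ball 0 ε) ∩ ball (0 : EuclideanSpace ℝ (Fin p)) δ =
        h '' (X ∩ ball 0 ε') ∩ ball (0 : EuclideanSpace ℝ (Fin p)) δ) ↔
    (∃ r > 0,
      closure {x ∈ X | ∀ y ∈ X, h y = h x → ‖x‖ ≤ ‖y‖} ∩ {x ∈ X | h x = 0} ∩ ball 0 r
        = {0}) := by
  change _ ↔ ∃ r > 0, closure (minNormInFibre X h) ∩ _ ∩ _ = _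
  constructor
  · rintro ⟨ε₀, hε₀, hgerm⟩
    refine ⟨ε₀, hε₀, subset_antisymm ?_ ?_⟩
    · rintro z ⟨⟨hzN, hzX, hz0⟩, hzε₀⟩
      by_contra hz
      have hzpos : 0 < ‖z‖ := norm_pos_iff.2 hz
      have hzε₀ : ‖z‖ < ε₀ := mem_ball_zero_iff.1 hzε₀
      obtain ⟨δ, hδ, heq⟩ := hgerm (‖z‖ / 2) ((‖z‖ + ε₀) / 2) (by positivity) (by linarith)
        (by positivity) (by linarith)
      exact image_inter_ball_inter_ball_ne (hcont z hzX) hzN hz0 (by linarith) (by linarith) hδ heq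
    · rintro _ rfl
      exact ⟨⟨subset_closure (zero_mem_minNormInFibre h0X), h0X, h0⟩, mem_ball_self hε₀⟩
  · rintro ⟨r, hr, hiso⟩
    exact ⟨r, hr, fun ε ε' hε hεr hε' hε'r =>
      exists_image_inter_ball_inter_ball_eq hX hcont hiso.subset hε hεr hε' hε'r⟩

/-- Criterion for a continuous map on a closed set to have a well-defined image
germ at the origin: the image of `h` is a well-defined germ at `0` if and only if
`0` is an isolated point of `closure (N_h) ∩ h⁻¹(0)`, where `N_h` is the set of
points of minimal norm in their fibre. -/
theorem stmt_10 (m p : ℕ) (hm : 1 ≤ m) (hp : 1 ≤ p)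
    (X : Set (EuclideanSpace ℝ (Fin m))) (hX : IsClosed X)
    (h0X : (0 : EuclideanSpace ℝ (Fin m)) ∈ X)
    (h : EuclideanSpace ℝ (Fin m) → EuclideanSpace ℝ (Fin p))
    (hcont : ContinuousOn h X) (h0 : h 0 = 0) :
    (∃ ε₀ > 0, ∀ ε ε', 0 < ε → ε < ε₀ → 0 < ε' → ε' < ε₀ → ∃ δ > 0,
        h '' (X ∩ ball 0 ε) ∩ ball (0 : EuclideanSpace ℝ (Fin p)) δ =
        h '' (X ∩ ball 0 ε') ∩ ball (0 : EuclideanSpace ℝ (Fin p)) δ) ↔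
    (∃ r > 0,
      closure {x ∈ X | ∀ y ∈ X, h y = h x → ‖x‖ ≤ ‖y‖} ∩ {x ∈ X | h x = 0} ∩ ball 0 r
        = {0}) :=
  stmt_10_general m p X hX h0X h hcont h0
end

section
/- Let m > p ≥ 1, let U be an open neighborhood of 0 in ℝ^m (with its Euclidean inner product), and let G : U → ℝ^p be real-analytic with G(0) = 0. Assume Sing G ∩ U ⊆ G^{-1}(0). Define the Milnor set M(G) := {x ∈ U : the Fréchet derivative DG(x) is surjective and x belongs to the orthogonal complement of ker DG(x) in ℝ^m}. Assume G is tame: there exists ρ₀ > 0 such that closure(M(G) \ G^{-1}(0)) ∩ G^{-1}(0) ∩ B_{ρ₀} ⊆ {0}. Then the image of G is well-defined as a set germ at the origin: there exists ε₀ > 0 such that for all ε, ε' ∈ (0, ε₀) there exists δ > 0 with G(U ∩ B_ε) ∩ B_δ = G(U ∩ B_ε') ∩ B_δ. -/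
/-!
Let `y ≠ 0` be a value of `G` attained in `B_R`. A point of least norm in the fibre
`G⁻¹(y) ∩ B̄_R` is a regular point of `G` (as `Sing G ⊆ G⁻¹(0)`), so by Lagrange multipliers
it lies in the Milnor set. By tameness the closure of `M(G) \ G⁻¹(0)` meets the compact shell
`ε ≤ ‖x‖ ≤ R` away from `G⁻¹(0)`, so `‖G‖ ≥ δ > 0` there. Hence for `‖y‖ < δ` that point
has norm `< ε`, i.e. `G(B_R) ∩ B_δ ⊆ G(B_ε)`, which gives the equality of germs.
-/

open Metric Function Topology

theorem exists_isLocalMinOn_norm_fibre {E F : Type*} [NormedAddCommGroup E] [ProperSpace E]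
    [TopologicalSpace F] [T1Space F] {G : E → F} {R : ℝ} (hG : ContinuousOn G (closedBall 0 R))
    {x : E} (hx : ‖x‖ < R) :
    ∃ z, G z = G x ∧ ‖z‖ ≤ ‖x‖ ∧ IsLocalMinOn (‖·‖) {w | G w = G z} z := by
  have hK : IsCompact (closedBall 0 R ∩ G ⁻¹' {G x}) :=
    (isCompact_closedBall 0 R).of_isClosed_subset
      (hG.preimage_isClosed_of_isClosed isClosed_closedBall isClosed_singleton)
      Set.inter_subset_left
  have hxK : x ∈ closedBall 0 R ∩ G ⁻¹' {G x} := ⟨mem_closedBall_zero_iff.2 hx.le, rfl⟩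
  obtain ⟨z, ⟨-, hzx⟩, hzmin⟩ := hK.exists_isMinOn ⟨x, hxK⟩ continuous_norm.continuousOn
  have hzx' : ‖z‖ ≤ ‖x‖ := hzmin hxK
  refine ⟨z, hzx, hzx', ?_⟩
  have hball : ball (0 : E) R ∈ 𝓝 z :=
    isOpen_ball.mem_nhds (mem_ball_zero_iff.2 (hzx'.trans_lt hx))
  filter_upwards [nhdsWithin_le_nhds hball, self_mem_nhdsWithin] with w hwR (hwz : G w = G z)
  exact hzmin ⟨ball_subset_closedBall hwR, hwz.trans hzx⟩

section
variable {E F : Type*} [NormedAddCommGroup E] [InnerProductSpace ℝ E] [NormedAddCommGroup F]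
  [NormedSpace ℝ F]

def milnorSet (G : E → F) (U : Set E) : Set E :=
  {x ∈ U | Surjective (fderiv ℝ G x) ∧ x ∈ (LinearMap.ker (fderiv ℝ G x).toLinearMap)ᗮ}

theorem mem_orthogonal_ker_of_isLocalMinOn_norm [CompleteSpace E] [CompleteSpace F]
    {G : E → F} {G' : E →L[ℝ] F} {z : E}
    (hG : HasStrictFDerivAt G G' z) (hsurj : Surjective G')
    (hmin : IsLocalMinOn (‖·‖) {x | G x = G z} z) :
    z ∈ (LinearMap.ker G'.toLinearMap)ᗮ := by
  have hmin_sq : IsLocalMinOn (‖·‖ ^ 2) {x | G x = G z} z :=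
    Filter.Eventually.mono hmin fun x hx => pow_le_pow_left₀ (norm_nonneg z) hx 2
  obtain ⟨Λ, Λ₀, hne, hΛ⟩ := IsLocalExtrOn.exists_linear_map_of_hasStrictFDerivAt
    (Or.inl hmin_sq) hG (hasStrictFDerivAt_norm_sq z)
  have hΛ₀ : Λ₀ ≠ 0 := by
    rintro rfl
    refine hne (Prod.ext (LinearMap.ext fun w => ?_) rfl)
    obtain ⟨v, rfl⟩ := hsurj w
    simpa using hΛ v
  refine (Submodule.mem_orthogonal' _ _).2 fun v (hv : G' v = 0) => ?_
  simpa [hv, hΛ₀, real_inner_comm] using hΛ v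

theorem exists_image_inter_ball_subset_of_tame [FiniteDimensional ℝ E] [CompleteSpace F]
    {G : E → F} {U : Set E} {R ε : ℝ} (hε : 0 < ε) (hRU : closedBall 0 R ⊆ U)
    (hG : ∀ x ∈ U, HasStrictFDerivAt G (fderiv ℝ G x) x) (hG0 : G 0 = 0)
    (hsing : {x ∈ U | ¬ Surjective (fderiv ℝ G x)} ⊆ {x | G x = 0})
    (htame : closure (milnorSet G U \ {x | G x = 0}) ∩ {x | G x = 0} ∩ closedBall 0 R ⊆ {0}) :
    ∃ δ > 0, G '' (U ∩ ball 0 R) ∩ ball 0 δ ⊆ G '' (U ∩ ball 0 ε) := by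
  have hGc : ContinuousOn G U := fun x hx => (hG x hx).continuousAt.continuousWithinAt
  set A := closure (milnorSet G U \ {x | G x = 0}) ∩ {x | ε ≤ ‖x‖} ∩ closedBall 0 R
  have hA : IsCompact A := (isCompact_closedBall 0 R).inter_left
    (isClosed_closure.inter (isClosed_le continuous_const continuous_norm))
  have hGA : ∀ x ∈ A, 0 < ‖G x‖ := by
    rintro x ⟨⟨hxM, hxε⟩, hxR⟩
    refine norm_pos_iff.2 fun hx0 => ?_
    obtain rfl : x = 0 := htame ⟨⟨hxM, hx0⟩, hxR⟩
    exact hε.not_ge (by simpa using hxε)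
  obtain ⟨δ, hδ, hδA⟩ := hA.exists_forall_le'
    (continuous_norm.comp_continuousOn (hGc.mono fun x hx => hRU hx.2)) hGA
  refine ⟨δ, hδ, ?_⟩
  rintro _ ⟨⟨x, ⟨-, hxR⟩, rfl⟩, hxδ⟩
  rw [mem_ball_zero_iff] at hxR hxδ
  obtain ⟨z, hzx, hzx', hzmin⟩ := exists_isLocalMinOn_norm_fibre (hGc.mono hRU) hxR
  have hzR : z ∈ closedBall 0 R := mem_closedBall_zero_iff.2 (hzx'.trans hxR.le)
  rcases lt_or_ge ‖z‖ ε with hzε | hzε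
  · exact ⟨z, ⟨hRU hzR, mem_ball_zero_iff.2 hzε⟩, hzx⟩
  by_cases hGx : G x = 0
  · refine ⟨0, ⟨hRU (mem_closedBall_self ?_), mem_ball_self hε⟩, hG0.trans hGx.symm⟩
    exact (norm_nonneg x).trans hxR.le
  have hzU := hRU hzR
  have hsurj : Surjective (fderiv ℝ G z) := by
    by_contra h
    exact hGx (hzx ▸ hsing ⟨hzU, h⟩)
  have hzM : z ∈ milnorSet G U \ {x | G x = 0} :=
    ⟨⟨hzU, hsurj, mem_orthogonal_ker_of_isLocalMinOn_norm (hG z hzU) hsurj hzmin⟩,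
      hzx.trans_ne hGx⟩
  have hδz : δ ≤ ‖G z‖ := hδA z ⟨⟨subset_closure hzM, hzε⟩, hzR⟩
  exact absurd (hzx ▸ hxδ) hδz.not_gt

end

theorem stmt_11_general (m p : ℕ)
    (U : Set (EuclideanSpace ℝ (Fin m))) (hU : IsOpen U)
    (h0U : (0 : EuclideanSpace ℝ (Fin m)) ∈ U)
    (G : EuclideanSpace ℝ (Fin m) → EuclideanSpace ℝ (Fin p))
    (hG : AnalyticOnNhd ℝ G U) (hG0 : G 0 = 0)
    (hsing : {x ∈ U | ¬ Function.Surjective (fderiv ℝ G x)} ⊆ {x | G x = 0})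
    (htame : ∃ ρ₀ > 0,
      closure ({x ∈ U | Function.Surjective (fderiv ℝ G x) ∧
            x ∈ (LinearMap.ker (fderiv ℝ G x).toLinearMap)ᗮ} \ {x | G x = 0})
        ∩ {x | G x = 0} ∩ ball 0 ρ₀ ⊆ {0}) :
    ∃ ε₀ > 0, ∀ ε ε', 0 < ε → ε < ε₀ → 0 < ε' → ε' < ε₀ → ∃ δ > 0,
      G '' (U ∩ ball 0 ε) ∩ ball (0 : EuclideanSpace ℝ (Fin p)) δ =
      G '' (U ∩ ball 0 ε') ∩ ball (0 : EuclideanSpace ℝ (Fin p)) δ := by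
  obtain ⟨ρ₀, hρ₀, htame⟩ := htame
  obtain ⟨R, hR, hRU⟩ := nhds_basis_closedBall.mem_iff.1
    (Filter.inter_mem (hU.mem_nhds h0U) (ball_mem_nhds 0 hρ₀))
  have htameR :
      closure (milnorSet G U \ {x | G x = 0}) ∩ {x | G x = 0} ∩ closedBall 0 R ⊆ {0} :=
    fun x hx => htame ⟨hx.1, (hRU hx.2).2⟩
  have key : ∀ ε > 0, ∃ δ > 0,
      G '' (U ∩ ball 0 R) ∩ ball 0 δ ⊆ G '' (U ∩ ball 0 ε) :=
    fun ε hε => exists_image_inter_ball_subset_of_tame hε (hRU.trans Set.inter_subset_left)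
      (fun x hx => (hG x hx).hasStrictFDerivAt) hG0 hsing htameR
  refine ⟨R, hR, fun ε ε' hε hεR hε' hε'R => ?_⟩
  obtain ⟨δ, hδ, hδε⟩ := key ε hε
  obtain ⟨δ', hδ', hδ'ε'⟩ := key ε' hε'
  have hmono : ∀ η < R, G '' (U ∩ ball 0 η) ⊆ G '' (U ∩ ball 0 R) := fun η hη =>
    Set.image_mono (Set.inter_subset_inter_right U (ball_subset_ball hη.le))
  refine ⟨min δ δ', lt_min hδ hδ', Set.Subset.antisymm ?_ ?_⟩ <;>
    rintro y ⟨hy, hyδ⟩ <;> refine ⟨?_, hyδ⟩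
  · exact hδ'ε' ⟨hmono ε hεR hy, ball_subset_ball (min_le_right δ δ') hyδ⟩
  · exact hδε ⟨hmono ε' hε'R hy, ball_subset_ball (min_le_left δ δ') hyδ⟩

/-- Tame implies nice: if `Sing G ⊆ G⁻¹(0)` and the Milnor set `M(G)` of
`ρ`-nonregular points satisfies `closure(M(G) \ G⁻¹(0)) ∩ G⁻¹(0) ⊆ {0}` near the
origin, then the image of `G` is well-defined as a set germ at the origin. -/
theorem stmt_11 (m p : ℕ) (hp : 1 ≤ p) (hmp : p < m)
    (U : Set (EuclideanSpace ℝ (Fin m))) (hU : IsOpen U)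
    (h0U : (0 : EuclideanSpace ℝ (Fin m)) ∈ U)
    (G : EuclideanSpace ℝ (Fin m) → EuclideanSpace ℝ (Fin p))
    (hG : AnalyticOnNhd ℝ G U) (hG0 : G 0 = 0)
    (hsing : {x ∈ U | ¬ Function.Surjective (fderiv ℝ G x)} ⊆ {x | G x = 0})
    (htame : ∃ ρ₀ > 0,
      closure ({x ∈ U | Function.Surjective (fderiv ℝ G x) ∧
            x ∈ (LinearMap.ker (fderiv ℝ G x).toLinearMap)ᗮ} \ {x | G x = 0})
        ∩ {x | G x = 0} ∩ ball 0 ρ₀ ⊆ {0}) :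
    ∃ ε₀ > 0, ∀ ε ε', 0 < ε → ε < ε₀ → 0 < ε' → ε' < ε₀ → ∃ δ > 0,
      G '' (U ∩ ball 0 ε) ∩ ball (0 : EuclideanSpace ℝ (Fin p)) δ =
      G '' (U ∩ ball 0 ε') ∩ ball (0 : EuclideanSpace ℝ (Fin p)) δ :=
  stmt_11_general m p U hU h0U G hG hG0 hsing htame
end

section
/- Let G : ℝ³ → ℝ² be given by G(x, y, v) = (x² + y², v·(x² + y²)) (Hansen's example). Then the image of G is NOT well-defined as a set germ at 0: for every ε₀ > 0 there exist ε, ε' with 0 < ε' < ε < ε₀ such that for every δ > 0 one has G(B_ε) ∩ B_δ ≠ G(B_ε') ∩ B_δ. -/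
open Metric

/-- Hansen's example `G(x,y,v) = (x² + y², v(x² + y²))`: the image of `G` is not
well-defined as a set germ at the origin. -/
theorem stmt_13 :
    ∀ ε₀ > (0 : ℝ), ∃ ε ε' : ℝ, 0 < ε' ∧ ε' < ε ∧ ε < ε₀ ∧ ∀ δ > (0 : ℝ),
      (fun v : ℝ × ℝ × ℝ => (v.1 ^ 2 + v.2.1 ^ 2, v.2.2 * (v.1 ^ 2 + v.2.1 ^ 2))) ''
          ball 0 ε ∩ ball (0 : ℝ × ℝ) δ ≠
      (fun v : ℝ × ℝ × ℝ => (v.1 ^ 2 + v.2.1 ^ 2, v.2.2 * (v.1 ^ 2 + v.2.1 ^ 2))) ''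
          ball 0 ε' ∩ ball (0 : ℝ × ℝ) δ := by
  intro ε₀ hε₀
  refine ⟨ε₀ / 2, ε₀ / 4, by linarith, by linarith, by linarith, ?_⟩
  intro δ hδ
  set ε : ℝ := ε₀ / 2 with hε
  set v₀ : ℝ := 3 * ε₀ / 8 with hv₀
  have hv₀pos : 0 < v₀ := by positivity
  set s : ℝ := min (δ / (1 + v₀)) (ε ^ 2) / 2 with hs
  have hspos : 0 < s := by
    have h1 : 0 < δ / (1 + v₀) := by positivity
    have h2 : 0 < ε ^ 2 := by positivity
    have := lt_min h1 h2
    positivity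
  have hs1 : s ≤ δ / (1 + v₀) / 2 := by
    have := min_le_left (δ / (1 + v₀)) (ε ^ 2)
    rw [hs]; linarith
  have hs2 : s ≤ ε ^ 2 / 2 := by
    have := min_le_right (δ / (1 + v₀)) (ε ^ 2)
    rw [hs]; linarith
  have hsδ : (1 + v₀) * s ≤ δ / 2 := by
    have h : (1 + v₀) * s ≤ (1 + v₀) * (δ / (1 + v₀) / 2) := by
      apply mul_le_mul_of_nonneg_left hs1 (by linarith)
    calc (1 + v₀) * s ≤ (1 + v₀) * (δ / (1 + v₀) / 2) := h
      _ = δ / 2 := by field_simp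
  intro heq
  -- the point (s, v₀ * s) is in the left set
  have hmem : ((s, v₀ * s) : ℝ × ℝ) ∈
      (fun v : ℝ × ℝ × ℝ => (v.1 ^ 2 + v.2.1 ^ 2, v.2.2 * (v.1 ^ 2 + v.2.1 ^ 2))) ''
        ball 0 ε ∩ ball (0 : ℝ × ℝ) δ := by
    constructor
    · refine ⟨(Real.sqrt s, 0, v₀), ?_, ?_⟩
      · rw [mem_ball_zero_iff, Prod.norm_def, Prod.norm_def]
        have hsq : Real.sqrt s < ε := by
          have : s < ε ^ 2 := by linarith
          have := Real.sqrt_lt_sqrt (le_of_lt hspos) this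
          rwa [Real.sqrt_sq (by positivity)] at this
        refine max_lt ?_ (max_lt ?_ ?_)
        · rwa [Real.norm_eq_abs, abs_of_nonneg (Real.sqrt_nonneg s)]
        · simp [hε]; linarith
        · rw [Real.norm_eq_abs, abs_of_pos hv₀pos, hv₀, hε]; linarith
      · simp only
        rw [Real.sq_sqrt (le_of_lt hspos)]
        norm_num
    · rw [mem_ball_zero_iff, Prod.norm_def]
      have h1 : s < δ := by nlinarith
      have h2 : v₀ * s < δ := by nlinarith
      refine max_lt ?_ ?_
      · rwa [Real.norm_eq_abs, abs_of_pos hspos]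
      · rw [Real.norm_eq_abs, abs_of_pos (by positivity)]; exact h2
  rw [heq] at hmem
  obtain ⟨⟨⟨a, b, c⟩, hball, habc⟩, _⟩ := hmem
  simp only [Prod.mk.injEq] at habc
  obtain ⟨h1, h2⟩ := habc
  rw [mem_ball_zero_iff, Prod.norm_def, Prod.norm_def] at hball
  have hc : |c| < ε₀ / 4 := by
    have := hball
    rw [Real.norm_eq_abs, Real.norm_eq_abs, Real.norm_eq_abs] at this
    exact lt_of_le_of_lt (le_max_of_le_right (le_max_right _ _)) this
  have hceq : c = v₀ := by
    rw [h1] at h2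
    have := mul_right_cancel₀ (ne_of_gt hspos) h2
    exact this
  rw [hceq, hv₀, abs_of_pos (by positivity)] at hc
  linarith
end

section
/- Let h : ℂ² → ℂ be given by h(z, w) = f(z,w)·conj(g(z,w)) with f(z,w) = z(1 + w) and g(z,w) = z, i.e., h(z, w) = |z|²·(1 + w). Then the image of h is NOT well-defined as a set germ at 0: for every ε₀ > 0 there exist ε, ε' with 0 < ε' < ε < ε₀ such that for every δ > 0 one has h(B_ε) ∩ B_δ ≠ h(B_ε') ∩ B_δ. -/
open Metric

/-- For `f(z,w) = z(1+w)`, `g(z,w) = z`, the image of `h = f·conj g`, i.e.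
`h(z,w) = z(1+w)·conj z = |z|²(1+w)`, is not well-defined as a set germ at the
origin. -/
theorem stmt_15 :
    ∀ ε₀ > (0 : ℝ), ∃ ε ε' : ℝ, 0 < ε' ∧ ε' < ε ∧ ε < ε₀ ∧ ∀ δ > (0 : ℝ),
      (fun v : ℂ × ℂ => v.1 * (1 + v.2) * (starRingEnd ℂ) v.1) ''
          ball 0 ε ∩ ball (0 : ℂ) δ ≠
      (fun v : ℂ × ℂ => v.1 * (1 + v.2) * (starRingEnd ℂ) v.1) ''
          ball 0 ε' ∩ ball (0 : ℂ) δ := by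
  intro ε₀ hε₀
  set ε : ℝ := min (ε₀ / 2) (1 / 2) with hεdef
  have hε0 : 0 < ε := lt_min (by linarith) (by norm_num)
  have hεle : ε ≤ 1 / 2 := min_le_right _ _
  have hεε₀ : ε < ε₀ := lt_of_le_of_lt (min_le_left _ _) (by linarith)
  refine ⟨ε, ε / 2, by linarith, by linarith, hεε₀, ?_⟩
  intro δ hδ
  set c : ℝ := 5 * ε / 6 with hcdef
  have hc0 : 0 < c := by positivity
  have hcε : c < ε := by linarith
  have hckey : (ε / 2) < c * (1 - ε / 2) := by nlinarith
  -- choose r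
  set r : ℝ := min ε (Real.sqrt (δ / 2)) / 2 with hrdef
  have hsq : 0 < Real.sqrt (δ / 2) := Real.sqrt_pos.mpr (by linarith)
  have hr0 : 0 < r := by positivity
  have hrε : r < ε := by
    have := min_le_left ε (Real.sqrt (δ / 2))
    simp only [hrdef]; linarith
  have hr2 : r ^ 2 * 2 < δ := by
    have h1 : r ≤ Real.sqrt (δ / 2) / 2 := by
      have := min_le_right ε (Real.sqrt (δ / 2)); simp only [hrdef]; linarith
    have h2 : r ^ 2 ≤ (Real.sqrt (δ / 2)) ^ 2 / 4 := by nlinarith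
    have h3 : (Real.sqrt (δ / 2)) ^ 2 = δ / 2 := Real.sq_sqrt (by linarith)
    nlinarith
  -- the witness point
  set p : ℂ := (r ^ 2 : ℝ) * (1 + (c : ℝ) * Complex.I) with hpdef
  intro hEq
  -- p is in the LHS
  have hmem : p ∈ (fun v : ℂ × ℂ => v.1 * (1 + v.2) * (starRingEnd ℂ) v.1) ''
      ball 0 ε ∩ ball (0 : ℂ) δ := by
    constructor
    · refine ⟨((r : ℂ), (c : ℝ) * Complex.I), ?_, ?_⟩
      · rw [mem_ball_zero_iff]
        have h1 : ‖((r : ℂ), (c : ℝ) * Complex.I)‖ = max ‖(r : ℂ)‖ ‖(c : ℝ) * Complex.I‖ :=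
          rfl
        rw [h1]
        have h2 : ‖(r : ℂ)‖ = r := by
          rw [Complex.norm_real, Real.norm_eq_abs, abs_of_pos hr0]
        have h3 : ‖(c : ℝ) * Complex.I‖ = c := by
          rw [norm_mul, Complex.norm_I, mul_one, Complex.norm_real, Real.norm_eq_abs,
            abs_of_pos hc0]
        rw [h2, h3]
        exact max_lt hrε hcε
      · simp only [hpdef]
        rw [Complex.conj_ofReal]
        push_cast
        ring
    · rw [mem_ball_zero_iff]
      have h1 : ‖p‖ ≤ r ^ 2 * (1 + c) := by
        rw [hpdef, norm_mul]
        have h2 : ‖(1 + (c : ℝ) * Complex.I : ℂ)‖ ≤ 1 + c := by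
          calc ‖(1 + (c : ℝ) * Complex.I : ℂ)‖ ≤ ‖(1 : ℂ)‖ + ‖(c : ℝ) * Complex.I‖ :=
                norm_add_le _ _
            _ = 1 + c := by
                rw [norm_one, norm_mul, Complex.norm_I, mul_one, Complex.norm_real,
                  Real.norm_eq_abs, abs_of_pos hc0]
        have h3 : ‖((r ^ 2 : ℝ) : ℂ)‖ = r ^ 2 := by
          rw [Complex.norm_real, Real.norm_eq_abs, abs_of_pos (by positivity)]
        rw [h3]
        nlinarith [norm_nonneg (1 + (c : ℝ) * Complex.I : ℂ)]
      have hc1 : c < 1 := by nlinarith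
      nlinarith
  rw [hEq] at hmem
  -- but p is not in the RHS
  obtain ⟨⟨⟨z, w⟩, hzw, heq⟩, -⟩ := hmem
  rw [mem_ball_zero_iff] at hzw
  have hwnorm : ‖w‖ < ε / 2 := lt_of_le_of_lt (le_max_right ‖z‖ ‖w‖) hzw
  have hwim : |w.im| < ε / 2 := lt_of_le_of_lt (Complex.abs_im_le_norm w) hwnorm
  have hwre : |w.re| < ε / 2 := lt_of_le_of_lt (Complex.abs_re_le_norm w) hwnorm
  simp only at heq
  have h2 : ((Complex.normSq z : ℝ) : ℂ) * (1 + w) = p := by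
    rw [← heq, ← Complex.mul_conj]; ring
  set a : ℝ := Complex.normSq z with hadef
  have ha0 : 0 ≤ a := Complex.normSq_nonneg z
  have hre : a * (1 + w.re) = r ^ 2 := by
    have := congrArg Complex.re h2
    simpa [hpdef, Complex.mul_re, Complex.mul_im, ← Complex.ofReal_pow] using this
  have him : a * w.im = r ^ 2 * c := by
    have := congrArg Complex.im h2
    simpa [hpdef, Complex.mul_re, Complex.mul_im, ← Complex.ofReal_pow] using this
  have hr2pos : 0 < r ^ 2 := by positivity
  have ha0' : 0 < a := by
    rcases eq_or_lt_of_le ha0 with h | h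
    · exfalso; rw [← h, zero_mul] at him; nlinarith
    · exact h
  have h5 : a * w.im < a * (ε / 2) := by
    have h : w.im < ε / 2 := lt_of_le_of_lt (le_abs_self _) hwim
    exact mul_lt_mul_of_pos_left h ha0'
  have h6 : a * (1 - ε / 2) < r ^ 2 := by
    have h : -(ε / 2) < w.re := neg_lt_of_abs_lt hwre
    rw [← hre]
    exact mul_lt_mul_of_pos_left (by linarith) ha0'
  -- r² c < a (ε/2) and a(1-ε/2) < r² give c(1-ε/2) < ε/2, contradiction
  clear hEq heq h2 hzw hwnorm hwim hwre
  clear_value a p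
  clear hpdef hadef p z
  nlinarith [mul_lt_mul_of_pos_right h6 hc0, mul_pos ha0' (sub_pos.mpr hckey)]
end
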